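/- arXiv:2407.12885 — 2 statements merged into one kernel-verified Lean document; each statement's English description precedes it below -/
import Mathlib

section
/- Let m be a positive integer and let x be a real number with 0 < x < π. Then ∑_{n=1}^∞ (-1)^{n-1} sin(nx)/n^{2m} = ((-1)^m π^{2m-1}/(2m-1)!) · ( 2^{2m-1} ζ'(1-2m, 1 - x/(2π)) − 2^{2m-1} ζ'(1-2m, x/(2π)) − ζ'(1-2m, 1 - x/π) + ζ'(1-2m, x/π) ). -/
open Filter Topology Finset Real

/-- The Hurwitz zeta function `ζ(s, a)` for a real parameter `a > 0`: the meromorphic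
continuation in `s` of the series `∑ k : ℕ, (k + a) ^ (-s)` (convergent for `Re s > 1`).
For `0 < a ≤ 1` it is Mathlib's `HurwitzZeta.hurwitzZeta`; for larger `a` it is obtained
through the recurrence `ζ(s, a) = ζ(s, a + 1) + a ^ (-s)`. -/
noncomputable def hzeta (s : ℂ) (a : ℝ) : ℂ :=
  HurwitzZeta.hurwitzZeta (a : UnitAddCircle) s -
    ∑ j ∈ Finset.range (⌈a⌉₊ - 1), ((a : ℂ) - ((⌈a⌉₊ : ℂ) - 1) + j) ^ (-s)

/-!
With `S(s, a) = ∑ₙ sin (2π n a) / nˢ` (Mathlib's `sinZeta`), the alternating series equals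
`S(2m, x/2π) - 2^(1-2m) S(2m, x/π)`: subtracting twice the even-indexed terms of
`∑ sin (n x) / n^(2m)` flips their sign. On the zeta side,
`ζ(s, 1-a) - ζ(s, a) = -2 ζ_odd(s, a)`, and differentiating the functional equation
`ζ_odd(1-s, a) = 2 (2π)^(-s) Γ(s) sin (π s / 2) S(s, a)` at `s = 2m`, where the sine vanishes,
gives `ζ_odd'(1-2m, a) = -(-1)^m π (2m-1)! (2π)^(-2m) S(2m, a)`.
-/

open HurwitzZeta

theorem hasSum_neg_one_pow_mul_succ {R : Type*} [Ring R] [TopologicalSpace R]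
    [IsTopologicalRing R] {f : ℕ → R} {A B : R} (hf0 : f 0 = 0) (hA : HasSum f A)
    (hB : HasSum (fun k => f (2 * k)) B) :
    HasSum (fun n => (-1) ^ n * f (n + 1)) (A - 2 * B) := by
  have hEven : HasSum (fun n => if Even n then f n else 0) B := by
    rw [← (mul_right_injective₀ two_ne_zero).hasSum_iff]
    · simpa [Function.comp_def] using hB
    · intro n hn
      rw [if_neg]
      rintro ⟨k, rfl⟩
      exact hn ⟨k, two_mul k⟩
  have hsigned := hA.sub (hEven.mul_left 2)
  rw [← hasSum_nat_add_iff' 1] at hsigned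
  replace hsigned : HasSum (fun n => f (n + 1) - 2 * if Even (n + 1) then f (n + 1) else 0)
      (A - 2 * B) := by
    simpa [hf0] using hsigned
  refine hsigned.congr_fun fun n => ?_
  rcases Nat.even_or_odd n with hn | hn
  · simp [hn.neg_one_pow, Nat.even_add_one, hn]
  · simp [hn.neg_one_pow, Nat.even_add_one, Nat.not_even_iff_odd.mpr hn]
    noncomm_ring

theorem hasSum_sin_mul_div_pow (x : ℝ) {k : ℕ} (hk : 2 ≤ k) :
    HasSum (fun n : ℕ => (Real.sin (x * n) : ℂ) / (n : ℂ) ^ k)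
      (sinZeta ((x / (2 * π) : ℝ) : UnitAddCircle) k) := by
  have hre : 1 < (k : ℂ).re := by simp; exact_mod_cast hk
  refine (hasSum_nat_sinZeta _ hre).congr_fun fun n => ?_
  rw [Complex.cpow_natCast]
  field_simp

theorem hasSum_neg_one_pow_mul_sin_div_pow (x : ℝ) {k : ℕ} (hk : 2 ≤ k) :
    HasSum (fun n : ℕ => (-1) ^ n * (Real.sin ((n + 1) * x) : ℂ) / ((n : ℂ) + 1) ^ k)
      (sinZeta ((x / (2 * π) : ℝ) : UnitAddCircle) k -
        2 / 2 ^ k * sinZeta ((x / π : ℝ) : UnitAddCircle) k) := by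
  have hEven :
      HasSum (fun j : ℕ => (Real.sin (x * (2 * j : ℕ)) : ℂ) / ((2 * j : ℕ) : ℂ) ^ k)
      (sinZeta ((x / π : ℝ) : UnitAddCircle) k / 2 ^ k) := by
    have h := (hasSum_sin_mul_div_pow (2 * x) hk).div_const (2 ^ k)
    rw [show 2 * x / (2 * π) = x / π by field_simp] at h
    refine h.congr_fun fun j => ?_
    push_cast
    rw [mul_pow]
    ring_nf
  have h := hasSum_neg_one_pow_mul_succ (by simp) (hasSum_sin_mul_div_pow x hk) hEven
  rw [div_mul_eq_mul_div, mul_div_assoc]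
  refine h.congr_fun fun n => ?_
  push_cast
  ring_nf

theorem ne_neg_natCast_of_re_pos {s : ℂ} (hs : 0 < s.re) (n : ℕ) : s ≠ -n := by
  rintro rfl
  simp at hs
  linarith [n.cast_nonneg (α := ℝ)]

theorem hasDerivAt_mul_of_apply_eq_zero {𝕜 : Type*} [NontriviallyNormedField 𝕜]
    {f g : 𝕜 → 𝕜} {g' z : 𝕜} (hf : DifferentiableAt 𝕜 f z) (hg : HasDerivAt g g' z)
    (hgz : g z = 0) :
    HasDerivAt (f * g) (f z * g') z := by
  simpa [hgz] using hf.hasDerivAt.mul hg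

theorem hasDerivAt_hurwitzZetaOdd_one_sub (a : UnitAddCircle) {m : ℕ} (hm : 0 < m) :
    HasDerivAt (fun s => hurwitzZetaOdd a (1 - s))
      ((-1) ^ m * π * (2 * m - 1).factorial / (2 * π) ^ (2 * m) * sinZeta a (2 * m))
      (2 * m) := by
  have hre : 0 < (2 * (m : ℂ)).re := by simp; exact_mod_cast hm
  set F : ℂ → ℂ := fun s => 2 * (2 * π) ^ (-s) * Complex.Gamma s * sinZeta a s
  have hF : DifferentiableAt ℂ F (2 * m) :=
    (((differentiableAt_const 2).mul ((differentiableAt_id.neg).const_cpow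
      (Or.inl (by simp [Real.pi_ne_zero])))).mul
      (Complex.differentiableAt_Gamma _ (ne_neg_natCast_of_re_pos hre))).mul
      (differentiableAt_sinZeta a _)
  have hsin : HasDerivAt (fun s : ℂ => Complex.sin (π * s / 2))
      (Complex.cos (π * (2 * m) / 2) * (π / 2)) (2 * m) :=
    (Complex.hasDerivAt_sin _).comp _
      (((hasDerivAt_id _).const_mul _).div_const 2 |>.congr_deriv (by simp))
  have hfe : (fun s => hurwitzZetaOdd a (1 - s)) =ᶠ[𝓝 (2 * (m : ℂ))]
      F * fun s => Complex.sin (π * s / 2) := by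
    filter_upwards [(isOpen_lt continuous_const Complex.continuous_re).mem_nhds hre] with s hs
    simp only [F, Pi.mul_apply, hurwitzZetaOdd_one_sub a (ne_neg_natCast_of_re_pos hs)]
    ring
  have hhalf : (π : ℂ) * (2 * m) / 2 = m * π := by ring
  have hcos : Complex.cos (m * π) = (-1) ^ m := by
    exact_mod_cast congrArg Complex.ofReal (Real.cos_nat_mul_pi m)
  have hGamma : Complex.Gamma (2 * m) = (2 * m - 1).factorial := by
    rw [← Complex.Gamma_nat_eq_factorial]
    push_cast [Nat.cast_sub (by omega : 1 ≤ 2 * m)]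
    ring_nf
  have hcpow : (2 * (π : ℂ)) ^ (-(2 * m : ℂ)) = ((2 * (π : ℂ)) ^ (2 * m))⁻¹ := by
    rw [Complex.cpow_neg, ← Complex.cpow_natCast]
    push_cast
    rfl
  refine (hasDerivAt_mul_of_apply_eq_zero hF hsin ?_).congr_of_eventuallyEq hfe |>.congr_deriv ?_
  · rw [hhalf]
    exact Complex.sin_nat_mul_pi m
  · simp only [F, hhalf, hcos, hGamma, hcpow]
    ring

theorem deriv_hurwitzZetaOdd_one_sub_two_mul (a : UnitAddCircle) {m : ℕ} (hm : 0 < m) :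
    deriv (hurwitzZetaOdd a) (1 - 2 * m) =
      -((-1) ^ m * π * (2 * m - 1).factorial / (2 * π) ^ (2 * m) * sinZeta a (2 * m)) := by
  rw [← (hasDerivAt_hurwitzZetaOdd_one_sub a hm).deriv, deriv_comp_const_sub, neg_neg]

theorem hurwitzZeta_neg (a : UnitAddCircle) :
    hurwitzZeta (-a) = fun s => hurwitzZeta a s - 2 * hurwitzZetaOdd a s := by
  funext s
  rw [hurwitzZetaOdd_eq]
  ring

theorem hzeta_eq_hurwitzZeta {a : ℝ} (ha₀ : 0 < a) (ha₁ : a ≤ 1) :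
    (fun s => hzeta s a) = hurwitzZeta a := by
  have hceil : ⌈a⌉₊ = 1 :=
    le_antisymm (Nat.ceil_le.mpr (by exact_mod_cast ha₁)) (Nat.ceil_pos.mpr ha₀)
  funext s
  simp [hzeta, hceil]

theorem deriv_hzeta_one_sub_sub_deriv_hzeta {a : ℝ} (ha₀ : 0 < a) (ha₁ : a < 1) {m : ℕ}
    (hm : 0 < m) :
    (-1) ^ m * (π : ℂ) ^ (2 * m - 1) / (2 * m - 1).factorial *
        (deriv (fun s => hzeta s (1 - a)) (1 - 2 * m) - deriv (fun s => hzeta s a) (1 - 2 * m)) =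
      2 / 2 ^ (2 * m) * sinZeta a (2 * m) := by
  have hne : 1 - 2 * (m : ℂ) ≠ 1 := by simp; omega
  have hreflect : ((1 - a : ℝ) : UnitAddCircle) = -(a : UnitAddCircle) := by
    simp [sub_eq_add_neg]
  rw [hzeta_eq_hurwitzZeta (by linarith) (by linarith), hzeta_eq_hurwitzZeta ha₀ ha₁.le,
    hreflect, hurwitzZeta_neg, deriv_fun_sub (differentiableAt_hurwitzZeta _ hne)
      ((differentiable_hurwitzZetaOdd _ _).const_mul 2),
    deriv_const_mul _ (differentiable_hurwitzZetaOdd _ _),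
    deriv_hurwitzZetaOdd_one_sub_two_mul _ hm]
  have hπ : (π : ℂ) ≠ 0 := by exact_mod_cast Real.pi_ne_zero
  have hfac : ((2 * m - 1).factorial : ℂ) ≠ 0 := by exact_mod_cast (2 * m - 1).factorial_ne_zero
  have hsign : ((-1 : ℂ) ^ m) ^ 2 = 1 := by rw [← pow_mul, pow_mul', neg_one_sq, one_pow]
  have hpi : (π : ℂ) ^ (2 * m - 1) * π = π ^ (2 * m) := pow_sub_one_mul (by omega) _
  field_simp
  linear_combination (2 * m - 1).factorial * 2 * 2 ^ (2 * m) * sinZeta a (2 * m) *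
    (π ^ (2 * m - 1) * π * hsign + hpi)

/-- For a positive integer `m` and `0 < x < π`,
`∑_{n=1}^∞ (-1)^(n-1) sin(nx)/n^(2m) = ((-1)^m π^(2m-1)/(2m-1)!) ·
  (2^(2m-1) ζ'(1-2m, 1 - x/(2π)) - 2^(2m-1) ζ'(1-2m, x/(2π))
   - ζ'(1-2m, 1 - x/π) + ζ'(1-2m, x/π))`. -/
theorem alt_sin_series_even_exponent_closed_form (m : ℕ) (hm : 0 < m)
    (x : ℝ) (hx0 : 0 < x) (hx1 : x < π) :
    Filter.Tendsto
      (fun N : ℕ => ∑ n ∈ Finset.range N,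
        (-1) ^ n * (Real.sin ((n + 1) * x) : ℂ) / ((n : ℂ) + 1) ^ (2 * m))
      Filter.atTop
      (𝓝 ((-1) ^ m * (π : ℂ) ^ (2 * m - 1) / (Nat.factorial (2 * m - 1) : ℂ) *
        (2 ^ (2 * m - 1) * deriv (fun s => hzeta s (1 - x / (2 * π))) (1 - 2 * (m : ℂ)) -
          2 ^ (2 * m - 1) * deriv (fun s => hzeta s (x / (2 * π))) (1 - 2 * (m : ℂ)) -
          deriv (fun s => hzeta s (1 - x / π)) (1 - 2 * (m : ℂ)) +
          deriv (fun s => hzeta s (x / π)) (1 - 2 * (m : ℂ))))) := by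
  have hπ := Real.pi_pos
  have hD₁ := deriv_hzeta_one_sub_sub_deriv_hzeta (a := x / (2 * π)) (by positivity)
    ((div_lt_one (by positivity)).mpr (by linarith)) hm
  have hD₂ := deriv_hzeta_one_sub_sub_deriv_hzeta (a := x / π) (by positivity)
    ((div_lt_one hπ).mpr hx1) hm
  have hpow : (2 : ℂ) ^ (2 * m - 1) * (2 / 2 ^ (2 * m)) = 1 := by
    rw [← mul_div_assoc, pow_sub_one_mul (by omega), div_self (by simp)]
  convert (hasSum_neg_one_pow_mul_sin_div_pow x (k := 2 * m) (by omega)).tendsto_sum_nat using 2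
  push_cast
  linear_combination
    2 ^ (2 * m - 1) * hD₁ - hD₂ + sinZeta ((x / (2 * π) : ℝ) : UnitAddCircle) (2 * m) * hpow
end

section
/- Let m be a positive integer and let x be a real number with 0 < x < π. Then lim_{α→2m−1} [ π x^{α−1} / (4 Γ(α) cos(πα/2)) + (−1)^{m−1} λ(α−2m+2) x^{2m−2}/(2m−2)! ] = (−1)^m x^{2m−2} ( log(x/2) − H_{2m−2} ) / (2·(2m−2)!). -/
open Filter Topology Real

/-- The Dirichlet lambda function `λ(s) = (1 - 2^(-s)) ζ(s)`, equal to
`∑_{n=1}^∞ (2n-1)^(-s)` for `Re s > 1`. -/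
noncomputable def dirichletLambda (s : ℂ) : ℂ := (1 - (2 : ℂ) ^ (-s)) * riemannZeta s

/-!
Write `n = 2m - 2`. Since `cos (π s / 2) = (-1)^m sin (π (s - n - 1) / 2)`, both summands have a
simple pole at `s = n + 1`: the first behaves like `x^n / (2 n! (s - n - 1))` because
`1 / sin u = 1 / u + o(1)` (from `‖sin u - u‖ ≤ ‖u‖^3`), and `λ(s - n) = (1 - 2^(n - s)) ζ(s - n)`
like `1 / (2 (s - n - 1))` because `ζ s = 1 / (s - 1) + γ + o(1)`. The residues cancel, so the
limit is the difference of the constant terms. These come from the derivatives of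
`x^(s-1) / Γ(s)` (with `Γ'(n+1) = n! (H_n - γ)`) and of `1 - 2^(n - s)` at `n + 1`, and the two
occurrences of `γ` cancel.
-/

open scoped Nat

/-- `f` has at most a simple pole at `a`, with residue `r` and constant term `c`. -/
def HasPoleExpansion (f : ℂ → ℂ) (a r c : ℂ) : Prop :=
  Tendsto (fun s => f s - r / (s - a)) (𝓝[≠] a) (𝓝 c)

namespace HasPoleExpansion

variable {f g : ℂ → ℂ} {a b r r' c c' g' : ℂ}

theorem sub (hf : HasPoleExpansion f a r c) (hg : HasPoleExpansion g a r' c') :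
    HasPoleExpansion (fun s => f s - g s) a (r - r') (c - c') :=
  (Tendsto.sub hf hg).congr fun s => by ring

theorem mul_left (hf : HasPoleExpansion f a r c) (hg : HasDerivAt g g' a) :
    HasPoleExpansion (fun s => g s * f s) a (g a * r) (g a * c + g' * r) := by
  have hslope := hasDerivAt_iff_tendsto_slope.mp hg
  refine ((hg.continuousAt.continuousWithinAt.tendsto.mul hf).add (hslope.mul_const r)).congr
    fun s => ?_
  simp only [slope_def_field]
  ring

theorem comp_sub_const (hf : HasPoleExpansion f (a - b) r c) :
    HasPoleExpansion (fun s => f (s - b)) a r c := by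
  have hshift : Tendsto (fun s => s - b) (𝓝[≠] a) (𝓝[≠] (a - b)) :=
    ((hasDerivAt_id a).sub_const b).tendsto_nhdsNE one_ne_zero
  exact (Tendsto.comp hf hshift).congr fun s => by simp [sub_sub_sub_cancel_right]

theorem tendsto_of_residue_eq_zero (hf : HasPoleExpansion f a r c) (hr : r = 0) :
    Tendsto f (𝓝[≠] a) (𝓝 c) := by
  simpa [HasPoleExpansion, hr] using hf

end HasPoleExpansion

theorem hasPoleExpansion_riemannZeta :
    HasPoleExpansion riemannZeta 1 1 eulerMascheroniConstant :=
  tendsto_riemannZeta_sub_one_div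

theorem norm_sub_sin_le {u : ℂ} (hu : ‖u‖ ≤ 1) : ‖u - Complex.sin u‖ ≤ ‖u‖ ^ 3 := by
  have hcubic := Complex.sin_bound hu
  calc ‖u - Complex.sin u‖ = ‖u ^ 3 / 6 - (Complex.sin u - (u - u ^ 3 / 6))‖ := by ring_nf
    _ ≤ ‖u‖ ^ 3 / 6 + ‖u‖ ^ 5 / 100 := by
        refine (norm_sub_le _ _).trans (add_le_add (by simp [norm_pow]) hcubic)
    _ ≤ ‖u‖ ^ 3 := by
        have h5 : ‖u‖ ^ 5 ≤ ‖u‖ ^ 3 := pow_le_pow_of_le_one (norm_nonneg u) hu (by norm_num)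
        nlinarith [pow_nonneg (norm_nonneg u) 3]

theorem tendsto_sub_sin_div_sq :
    Tendsto (fun u : ℂ => (u - Complex.sin u) / u ^ 2) (𝓝 0) (𝓝 0) := by
  refine squeeze_zero_norm' ?_ tendsto_norm_zero
  filter_upwards [Metric.closedBall_mem_nhds (0 : ℂ) one_pos] with u hu
  rw [mem_closedBall_zero_iff] at hu
  rcases eq_or_ne u 0 with rfl | hu0
  · simp
  rw [norm_div, norm_pow, div_le_iff₀ (by positivity)]
  exact (norm_sub_sin_le hu).trans_eq (by ring)

theorem hasPoleExpansion_inv_sin : HasPoleExpansion (fun u => (Complex.sin u)⁻¹) 0 1 0 := by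
  have hderiv : HasDerivAt Complex.sin 1 0 := by simpa using Complex.hasDerivAt_sin 0
  have hsin_div : Tendsto (fun u => u / Complex.sin u) (𝓝[≠] 0) (𝓝 1) := by
    simpa [slope_def_field] using (hasDerivAt_iff_tendsto_slope.mp hderiv).inv₀ one_ne_zero
  have hsin_ne : ∀ᶠ u in 𝓝[≠] (0 : ℂ), Complex.sin u ≠ 0 := by
    simpa using hderiv.eventually_ne (c := 0) one_ne_zero
  have hprod := (tendsto_sub_sin_div_sq.mono_left nhdsWithin_le_nhds).mul hsin_div
  rw [zero_mul] at hprod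
  refine hprod.congr' ?_
  filter_upwards [hsin_ne, self_mem_nhdsWithin] with u hsin (hu : u ≠ 0)
  field_simp
  ring

theorem hasPoleExpansion_inv_sin_const_mul {k : ℂ} (hk : k ≠ 0) :
    HasPoleExpansion (fun t => (Complex.sin (k * t))⁻¹) 0 k⁻¹ 0 := by
  have hscale : Tendsto (fun t => k * t) (𝓝[≠] 0) (𝓝[≠] 0) := by
    simpa using ((hasDerivAt_id (0 : ℂ)).const_mul k).tendsto_nhdsNE (by simpa using hk)
  refine (Tendsto.comp hasPoleExpansion_inv_sin hscale).congr fun t => ?_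
  simp only [Function.comp_apply, sub_zero]
  ring

theorem Complex.cos_pi_mul_div_two_eq (m : ℕ) (s : ℂ) :
    Complex.cos (π * s / 2) = (-1) ^ m * Complex.sin (π / 2 * (s - (2 * m - 1))) := by
  have hs : π * s / 2 = π / 2 * (s - (2 * m - 1)) - π / 2 + m * π := by ring
  rw [hs, Complex.cos_antiperiodic.add_nat_mul_eq, Complex.cos_sub_pi_div_two]

theorem Complex.hasDerivAt_inv_Gamma_nat (n : ℕ) :
    HasDerivAt (fun s => (Complex.Gamma s)⁻¹) ((eulerMascheroniConstant - harmonic n) / n !)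
      (n + 1) := by
  have hfac : (n ! : ℂ) ≠ 0 := by exact_mod_cast n.factorial_ne_zero
  refine ((Complex.hasDerivAt_Gamma_nat n).inv ?_).congr_deriv ?_ <;>
    rw [Complex.Gamma_nat_eq_factorial]
  · exact hfac
  · field_simp
    ring

theorem hasDerivAt_ofReal_cpow_sub_one_nat {x : ℝ} (hx : 0 < x) (n : ℕ) :
    HasDerivAt (fun s : ℂ => (x : ℂ) ^ (s - 1)) (x ^ n * Real.log x) (n + 1) := by
  have h := ((hasDerivAt_id' ((n : ℂ) + 1)).sub_const 1).const_cpow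
    (Or.inl (Complex.ofReal_ne_zero.mpr hx.ne'))
  rwa [add_sub_cancel_right, Complex.cpow_natCast, mul_one,
    ← Complex.ofReal_log hx.le] at h

theorem hasDerivAt_one_sub_two_cpow_neg_sub (n : ℕ) :
    HasDerivAt (fun s : ℂ => 1 - (2 : ℂ) ^ (-(s - n))) (Real.log 2 / 2) (n + 1) := by
  refine ((((hasDerivAt_id' ((n : ℂ) + 1)).sub_const (n : ℂ)).neg.const_cpow
    (Or.inl two_ne_zero)).const_sub 1).congr_deriv ?_
  rw [Pi.neg_apply, add_sub_cancel_left, Complex.cpow_neg_one, Complex.ofReal_log zero_le_two]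
  push_cast
  ring

theorem tendsto_cpow_div_Gamma_mul_sin_sub_dirichletLambda (n : ℕ) {x : ℝ} (hx : 0 < x) :
    Tendsto (fun s : ℂ => π * (x : ℂ) ^ (s - 1) /
          (4 * Complex.Gamma s * Complex.sin (π / 2 * (s - (n + 1)))) -
        dirichletLambda (s - n) * (x : ℂ) ^ n / (n ! : ℂ))
      (𝓝[≠] ((n : ℂ) + 1))
      (𝓝 ((x : ℂ) ^ n * ((Real.log (x / 2) : ℂ) - harmonic n) / (2 * n !))) := by
  have hfac : (n ! : ℂ) ≠ 0 := by exact_mod_cast n.factorial_ne_zero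
  have hπ : (π : ℂ) ≠ 0 := Complex.ofReal_ne_zero.mpr pi_ne_zero
  have hsin : HasPoleExpansion (fun s => (Complex.sin (π / 2 * (s - (n + 1))))⁻¹) (n + 1)
      (π / 2)⁻¹ 0 :=
    HasPoleExpansion.comp_sub_const (f := fun t => (Complex.sin (π / 2 * t))⁻¹)
      (by rw [sub_self]; exact hasPoleExpansion_inv_sin_const_mul (by simp))
  have hzeta : HasPoleExpansion (fun s => riemannZeta (s - n)) (n + 1) 1 eulerMascheroniConstant :=
    HasPoleExpansion.comp_sub_const (f := riemannZeta)
      (by rw [add_sub_cancel_left]; exact hasPoleExpansion_riemannZeta)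
  have hA := ((hasDerivAt_ofReal_cpow_sub_one_nat hx n).mul
    (Complex.hasDerivAt_inv_Gamma_nat n)).const_mul (π / 4 : ℂ)
  have hB := (hasDerivAt_one_sub_two_cpow_neg_sub n).mul_const ((x : ℂ) ^ n / n !)
  have hexp := (hsin.mul_left hA).sub (hzeta.mul_left hB)
  simp only [Pi.mul_apply, add_sub_cancel_right, add_sub_cancel_left, Complex.cpow_natCast,
    Complex.Gamma_nat_eq_factorial, Complex.cpow_neg_one] at hexp
  convert hexp.tendsto_of_residue_eq_zero ?_ using 2 with s
  · simp only [dirichletLambda]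
    ring
  · rw [Real.log_div hx.ne' two_ne_zero, Complex.ofReal_sub]
    field_simp
    ring
  · field_simp
    ring

theorem tendsto_ofReal_nhdsNE (a : ℝ) :
    Tendsto (fun α : ℝ => (α : ℂ)) (𝓝[≠] a) (𝓝[≠] (a : ℂ)) :=
  Complex.continuous_ofReal.continuousWithinAt.tendsto_nhdsWithin fun _ _ => by simp_all

theorem lambda_singular_limit_odd_general (m : ℕ) (hm : 0 < m) (x : ℝ) (hx0 : 0 < x) :
    Filter.Tendsto
      (fun α : ℝ =>
        (π : ℂ) * (x : ℂ) ^ ((α : ℂ) - 1) /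
            (4 * Complex.Gamma (α : ℂ) * Complex.cos ((π : ℂ) * α / 2)) +
          (-1) ^ (m - 1) * dirichletLambda ((α : ℂ) - 2 * m + 2) * (x : ℂ) ^ (2 * m - 2) /
            (Nat.factorial (2 * m - 2) : ℂ))
      (𝓝[≠] ((2 * m : ℝ) - 1))
      (𝓝 ((-1) ^ m * (x : ℂ) ^ (2 * m - 2) *
          ((Real.log (x / 2) : ℂ) - (harmonic (2 * m - 2) : ℂ)) /
        (2 * (Nat.factorial (2 * m - 2) : ℂ)))) := by
  obtain ⟨k, rfl⟩ := Nat.exists_eq_add_one_of_ne_zero hm.ne'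
  rw [show 2 * (k + 1) - 2 = 2 * k by omega, Nat.add_sub_cancel]
  have hpole : (((2 * (k + 1 : ℕ) : ℝ) - 1 : ℝ) : ℂ) = ((2 * k : ℕ) : ℂ) + 1 := by
    push_cast
    ring
  have hlim := ((tendsto_cpow_div_Gamma_mul_sin_sub_dirichletLambda (2 * k) hx0).comp
    (hpole ▸ tendsto_ofReal_nhdsNE _)).const_mul ((-1 : ℂ) ^ (k + 1))
  convert hlim using 2 with α
  · rw [Function.comp_apply, Complex.cos_pi_mul_div_two_eq (k + 1)]
    push_cast
    simp only [div_eq_mul_inv, mul_inv, ← inv_pow, inv_neg, inv_one]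
    ring_nf
  · ring

/-- For a positive integer `m` and `0 < x < π`,
`lim_{α→2m-1} [ π x^(α-1)/(4 Γ(α) cos(πα/2)) + (-1)^(m-1) λ(α-2m+2) x^(2m-2)/(2m-2)! ]
  = (-1)^m x^(2m-2) (log(x/2) - H_{2m-2}) / (2 (2m-2)!)`,
the limit being over real `α` tending to `2m-1` while avoiding `2m-1` itself. -/
theorem lambda_singular_limit_odd (m : ℕ) (hm : 0 < m) (x : ℝ) (hx0 : 0 < x) (hx1 : x < π) :
    Filter.Tendsto
      (fun α : ℝ =>
        (π : ℂ) * (x : ℂ) ^ ((α : ℂ) - 1) /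
            (4 * Complex.Gamma (α : ℂ) * Complex.cos ((π : ℂ) * α / 2)) +
          (-1) ^ (m - 1) * dirichletLambda ((α : ℂ) - 2 * m + 2) * (x : ℂ) ^ (2 * m - 2) /
            (Nat.factorial (2 * m - 2) : ℂ))
      (𝓝[≠] ((2 * m : ℝ) - 1))
      (𝓝 ((-1) ^ m * (x : ℂ) ^ (2 * m - 2) *
          ((Real.log (x / 2) : ℂ) - (harmonic (2 * m - 2) : ℂ)) /
        (2 * (Nat.factorial (2 * m - 2) : ℂ)))) :=
  lambda_singular_limit_odd_general m hm x hx0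
end
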